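/- arXiv:2503.02877 — 9 statements merged into one kernel-verified Lean document; each statement's English description precedes it below -/
import Mathlib

section
/- (General Limitation of Weak-to-Strong Generalization.) Let H be a real inner product space and f* ∈ H with ‖f*‖² ≤ 1. Suppose f_teacher ∈ H is shrink-optimal with respect to f*, and f_student ∈ H is shrink-optimal with respect to f_teacher. Set L_TE := ‖f_teacher − f*‖² and L_ST := ‖f_student − f*‖². Then L_ST ≥ (√(1 + 3·L_TE) − √(1 − L_TE))² / 4 ≥ (3/4)·L_TE². -/
open scoped RealInnerProductSpace

/-- `f` is shrink-optimal with respect to `g`: no shrinkage `α • f`, `0 ≤ α ≤ 1`,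
gets closer to `g` than `f` itself. -/
def ShrinkOptimal {H : Type*} [NormedAddCommGroup H] [InnerProductSpace ℝ H]
    (f g : H) : Prop :=
  ∀ α : ℝ, 0 ≤ α → α ≤ 1 → ‖f - g‖ ^ 2 ≤ ‖α • f - g‖ ^ 2

lemma shrinkOptimal_inner {H : Type*} [NormedAddCommGroup H] [InnerProductSpace ℝ H]
    (f g : H) (h : ShrinkOptimal f g) : ‖f‖ ^ 2 ≤ ⟪f, g⟫ := by
  by_contra hc
  push_neg at hc
  have hf : f ≠ 0 := by
    rintro rfl
    simp at hc
  have hN : (0:ℝ) < ‖f‖ ^ 2 := by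
    have : (0:ℝ) < ‖f‖ := norm_pos_iff.2 hf
    positivity
  set N := ‖f‖ ^ 2 with hNdef
  set I := ⟪f, g⟫ with hIdef
  have expand : ∀ α : ℝ, 0 ≤ α → α ≤ 1 → N - 2 * I ≤ α ^ 2 * N - 2 * α * I := by
    intro α h0 h1
    have key := h α h0 h1
    have e1 : ‖f - g‖ ^ 2 = N - 2 * I + ‖g‖ ^ 2 := by
      rw [norm_sub_sq_real]
    have e2 : ‖α • f - g‖ ^ 2 = α ^ 2 * N - 2 * α * I + ‖g‖ ^ 2 := by
      rw [norm_sub_sq_real, real_inner_smul_left, norm_smul]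
      simp [Real.norm_eq_abs, mul_pow, sq_abs]
      ring
    rw [e1, e2] at key
    linarith
  rcases le_or_gt I 0 with hI | hI
  · have := expand 0 le_rfl zero_le_one
    nlinarith
  · have hα0 : 0 ≤ I / N := by positivity
    have hα1 : I / N ≤ 1 := le_of_lt ((div_lt_one hN).2 hc)
    have key := expand (I / N) hα0 hα1
    have hαN : (I / N) * N = I := by field_simp
    nlinarith [sq_nonneg (N - I), mul_le_mul_of_nonneg_right key hN.le]

lemma aux_sq_bound (L pq : ℝ) (h : pq ^ 2 = (1 + 3 * L) * (1 - L)) :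
    (2 * pq) ^ 2 ≤ (2 + 2 * L - 3 * L ^ 2) ^ 2 := by
  nlinarith [sq_nonneg (L * (2 - 3 * L))]

set_option maxHeartbeats 1000000 in
/-- General limitation of weak-to-strong generalization: the student loss is at least
`(√(1 + 3 L_TE) − √(1 − L_TE))² / 4 ≥ (3/4) L_TE²`. -/
theorem weakToStrong_general_limit {H : Type*} [NormedAddCommGroup H]
    [InnerProductSpace ℝ H] (fstar fteacher fstudent : H)
    (hstar : ‖fstar‖ ^ 2 ≤ 1)
    (hteacher : ShrinkOptimal fteacher fstar)
    (hstudent : ShrinkOptimal fstudent fteacher) :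
    (Real.sqrt (1 + 3 * ‖fteacher - fstar‖ ^ 2) -
        Real.sqrt (1 - ‖fteacher - fstar‖ ^ 2)) ^ 2 / 4 ≤ ‖fstudent - fstar‖ ^ 2 ∧
    (3 / 4) * (‖fteacher - fstar‖ ^ 2) ^ 2 ≤
      (Real.sqrt (1 + 3 * ‖fteacher - fstar‖ ^ 2) -
        Real.sqrt (1 - ‖fteacher - fstar‖ ^ 2)) ^ 2 / 4 := by
  have hp := shrinkOptimal_inner _ _ hteacher
  have hq := shrinkOptimal_inner _ _ hstudent
  set L := ‖fteacher - fstar‖ ^ 2 with hLdef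
  have hL0 : (0:ℝ) ≤ L := by positivity
  have hLexp : L = ‖fteacher‖ ^ 2 - 2 * ⟪fteacher, fstar⟫ + ‖fstar‖ ^ 2 :=
    norm_sub_sq_real _ _
  have haL : ‖fteacher‖ ^ 2 ≤ 1 - L := by linarith
  have hL1 : L ≤ 1 := by
    have := sq_nonneg ‖fteacher‖
    linarith
  set u := ‖fteacher‖ with hudef
  have hu0 : (0:ℝ) ≤ u := norm_nonneg _
  set P := Real.sqrt (1 + 3 * L) with hPdef
  set Q := Real.sqrt (1 - L) with hQdef
  have hP0 : (0:ℝ) ≤ P := Real.sqrt_nonneg _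
  have hQ0 : (0:ℝ) ≤ Q := Real.sqrt_nonneg _
  have hP2 : P ^ 2 = 1 + 3 * L := Real.sq_sqrt (by linarith)
  have hQ2 : Q ^ 2 = 1 - L := Real.sq_sqrt (by linarith)
  have hPQ : Q ≤ P := Real.sqrt_le_sqrt (by linarith)
  have hQu : u ≤ Q := by
    have h1 : u ^ 2 ≤ Q ^ 2 := by rw [hQ2]; exact haL
    exact (pow_le_pow_iff_left₀ hu0 hQ0 two_ne_zero).1 h1
  -- B: distance from student to center of the ball
  set B := ‖fstudent - (2⁻¹ : ℝ) • fteacher‖ with hBdef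
  have hB0 : (0:ℝ) ≤ B := norm_nonneg _
  have hB2 : B ^ 2 = ‖fstudent‖ ^ 2 - ⟪fstudent, fteacher⟫ + u ^ 2 / 4 := by
    rw [hBdef, norm_sub_sq_real, real_inner_smul_right, norm_smul]
    simp [Real.norm_eq_abs, mul_pow, sq_abs]
    ring
  have hBu : B ≤ u / 2 := by
    have h1 : B ^ 2 ≤ (u / 2) ^ 2 := by
      have : (u / 2) ^ 2 = u ^ 2 / 4 := by ring
      rw [this]
      linarith
    exact (pow_le_pow_iff_left₀ hB0 (by linarith) two_ne_zero).1 h1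
  set A := ‖fstar - (2⁻¹ : ℝ) • fteacher‖ with hAdef
  have hA0 : (0:ℝ) ≤ A := norm_nonneg _
  have hA2 : A ^ 2 = ‖fstar‖ ^ 2 - ⟪fteacher, fstar⟫ + u ^ 2 / 4 := by
    rw [hAdef, norm_sub_sq_real, real_inner_smul_right, real_inner_comm, norm_smul]
    simp [Real.norm_eq_abs, mul_pow, sq_abs]
    ring
  set D := ‖fstudent - fstar‖ with hDdef
  have hD0 : (0:ℝ) ≤ D := norm_nonneg _
  have htri : A ≤ D + B := by
    have e : fstar - (2⁻¹ : ℝ) • fteacher =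
        (fstar - fstudent) + (fstudent - (2⁻¹ : ℝ) • fteacher) := by abel
    calc A = ‖(fstar - fstudent) + (fstudent - (2⁻¹ : ℝ) • fteacher)‖ := by rw [hAdef, e]
    _ ≤ ‖fstar - fstudent‖ + B := norm_add_le _ _
    _ = D + B := by rw [norm_sub_rev]
  -- key inequality: (P - Q)/2 + u/2 ≤ A
  have hT0 : (0:ℝ) ≤ (P - Q) / 2 := by linarith
  have hTA : (P - Q) / 2 + u / 2 ≤ A := by
    have hkey : (0:ℝ) ≤ (P - Q) * (Q - u) :=
      mul_nonneg (by linarith) (by linarith)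
    have hsq : ((P - Q) / 2 + u / 2) ^ 2 ≤ A ^ 2 := by nlinarith
    exact (pow_le_pow_iff_left₀ (by linarith) hA0 two_ne_zero).1 hsq
  have hTD : (P - Q) / 2 ≤ D := by linarith
  constructor
  · have h1 := pow_le_pow_left₀ hT0 hTD 2
    have e : ((P - Q) / 2) ^ 2 = (P - Q) ^ 2 / 4 := by ring
    linarith [h1, e.symm.trans_le h1]
  · have hR0 : (0:ℝ) ≤ 2 + 2 * L - 3 * L ^ 2 := by
      have hm : (0:ℝ) ≤ L * (1 - L) := mul_nonneg hL0 (by linarith)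
      have hm' : L * (1 - L) = L - L ^ 2 := by ring
      linarith
    have hPQsq : (P * Q) ^ 2 = (1 + 3 * L) * (1 - L) := by rw [mul_pow, hP2, hQ2]
    have h2 : (2 * (P * Q)) ^ 2 ≤ (2 + 2 * L - 3 * L ^ 2) ^ 2 :=
      aux_sq_bound L (P * Q) hPQsq
    have h3 : 2 * (P * Q) ≤ 2 + 2 * L - 3 * L ^ 2 :=
      (pow_le_pow_iff_left₀ (by positivity) hR0 two_ne_zero).1 h2
    have e : (P - Q) ^ 2 = P ^ 2 - 2 * (P * Q) + Q ^ 2 := by ring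
    linarith [hP2, hQ2, h3, e]
end

section
/- (Limitation of Weak-to-Strong Generalization with a Bounded Student.) Let H be a real inner product space and f* ∈ H with ‖f*‖² = 1. Suppose f_teacher ∈ H is shrink-optimal with respect to f*, and f_student ∈ H satisfies ‖f_student‖ ≤ ‖f_teacher‖. Set L_TE := ‖f_teacher − f*‖² and L_ST := ‖f_student − f*‖². Then L_ST ≥ (1 − √(1 − L_TE))² ≥ (1/4)·L_TE². -/
open scoped RealInnerProductSpace

/-- Limitation of weak-to-strong generalization with a bounded student:
the student loss is at least `(1 − √(1 − L_TE))² ≥ (1/4) L_TE²`. -/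
theorem weakToStrong_bounded_student_limit {H : Type*} [NormedAddCommGroup H]
    [InnerProductSpace ℝ H] (fstar fteacher fstudent : H)
    (hstar : ‖fstar‖ ^ 2 = 1)
    (hteacher : ShrinkOptimal fteacher fstar)
    (hstudent : ‖fstudent‖ ≤ ‖fteacher‖) :
    (1 - Real.sqrt (1 - ‖fteacher - fstar‖ ^ 2)) ^ 2 ≤ ‖fstudent - fstar‖ ^ 2 ∧
    (1 / 4) * (‖fteacher - fstar‖ ^ 2) ^ 2 ≤
      (1 - Real.sqrt (1 - ‖fteacher - fstar‖ ^ 2)) ^ 2 := by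
  set L : ℝ := ‖fteacher - fstar‖ ^ 2 with hLdef
  have hLnn : 0 ≤ L := by positivity
  -- key: ‖t‖² ≤ ⟪t, f*⟫
  have key : ‖fteacher‖ ^ 2 ≤ ⟪fteacher, fstar⟫ := by
    have h2 : 2 * ‖fteacher‖ ^ 2 ≤ 2 * ⟪fteacher, fstar⟫ := by
      apply le_of_forall_pos_le_add
      intro ε hε
      set δ : ℝ := min 1 (ε / (‖fteacher‖ ^ 2 + 1)) with hδdef
      have hδpos : 0 < δ := lt_min one_pos (by positivity)
      have hδ1 : δ ≤ 1 := min_le_left _ _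
      have hδε : δ * (‖fteacher‖ ^ 2 + 1) ≤ ε := by
        have := min_le_right 1 (ε / (‖fteacher‖ ^ 2 + 1))
        calc δ * (‖fteacher‖ ^ 2 + 1)
            ≤ (ε / (‖fteacher‖ ^ 2 + 1)) * (‖fteacher‖ ^ 2 + 1) := by
              apply mul_le_mul_of_nonneg_right this (by positivity)
          _ = ε := by field_simp
      have h := hteacher (1 - δ) (by linarith) (by linarith)
      rw [norm_sub_sq_real, norm_sub_sq_real, norm_smul,
        real_inner_smul_left] at h
      have hns : (‖(1 - δ)‖ * ‖fteacher‖) ^ 2 = (1 - δ) ^ 2 * ‖fteacher‖ ^ 2 := by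
        rw [mul_pow, Real.norm_eq_abs, sq_abs]
      rw [hns] at h
      nlinarith [sq_nonneg (‖fteacher‖), hδpos, hδ1, hδε]
    linarith
  have hip : ⟪fteacher, fstar⟫ ≤ ‖fteacher‖ := by
    calc ⟪fteacher, fstar⟫ ≤ ‖fteacher‖ * ‖fstar‖ := real_inner_le_norm _ _
      _ = ‖fteacher‖ := by
          have : ‖fstar‖ = 1 := by nlinarith [norm_nonneg fstar]
          rw [this, mul_one]
  have hLexp : L = ‖fteacher‖ ^ 2 - 2 * ⟪fteacher, fstar⟫ + 1 := by
    rw [hLdef, norm_sub_sq_real, hstar]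
  have hL1 : L ≤ 1 - ‖fteacher‖ ^ 2 := by nlinarith
  have hLle : L ≤ 1 := by nlinarith [sq_nonneg ‖fteacher‖]
  have hsq : Real.sqrt (1 - L) ^ 2 = 1 - L := Real.sq_sqrt (by linarith)
  have hsle1 : Real.sqrt (1 - L) ≤ 1 := by
    nlinarith [Real.sqrt_nonneg (1 - L)]
  have hsgeT : ‖fteacher‖ ≤ Real.sqrt (1 - L) := by
    have : ‖fteacher‖ ^ 2 ≤ 1 - L := by linarith
    nlinarith [Real.sqrt_nonneg (1 - L), norm_nonneg fteacher]
  have hstudle : ‖fstudent‖ ≤ Real.sqrt (1 - L) := le_trans hstudent hsgeT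
  constructor
  · -- (1 - √(1-L))² ≤ ‖s - f*‖²
    have htri : ‖fstar‖ - ‖fstudent‖ ≤ ‖fstudent - fstar‖ := by
      have := norm_sub_norm_le fstar fstudent
      have h2 : ‖fstar - fstudent‖ = ‖fstudent - fstar‖ := norm_sub_rev _ _
      linarith
    have hones : ‖fstar‖ = 1 := by nlinarith [norm_nonneg fstar]
    have h1 : 1 - Real.sqrt (1 - L) ≤ ‖fstudent - fstar‖ := by
      rw [hones] at htri; linarith
    have h0 : 0 ≤ 1 - Real.sqrt (1 - L) := by linarith
    nlinarith
  · nlinarith [Real.sqrt_nonneg (1 - L), hsq, hsle1, sq_nonneg (1 - Real.sqrt (1 - L))]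
end

section
/- (Limitation of Weak-to-Strong Generalization with Bootstrapping.) Let H be a real inner product space, f* ∈ H with ‖f*‖² = 1, and let f : ℕ → H be a sequence such that f 0 is shrink-optimal with respect to f* and, for every i, f (i+1) is shrink-optimal with respect to f i. Set L_TE := ‖f 0 − f*‖². Then for every i, ‖f i − f*‖² ≥ (1 − √(1 − L_TE))² ≥ (1/4)·L_TE². -/
open scoped RealInnerProductSpace

lemma inner_ge_of_shrinkOptimal {H : Type*} [NormedAddCommGroup H]
    [InnerProductSpace ℝ H] {f g : H} (h : ShrinkOptimal f g) :
    ‖f‖ ^ 2 ≤ ⟪f, g⟫ := by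
  have expand : ∀ α : ℝ, ‖α • f - g‖ ^ 2 = α ^ 2 * ‖f‖ ^ 2 - 2 * (α * ⟪f, g⟫) + ‖g‖ ^ 2 := by
    intro α
    rw [@norm_sub_sq_real, norm_smul, real_inner_smul_left]
    simp only [mul_pow, Real.norm_eq_abs, sq_abs]
    try ring
  have key : ∀ ε : ℝ, 0 < ε → ε ≤ 1 → (2 - ε) * ‖f‖ ^ 2 ≤ 2 * ⟪f, g⟫ := by
    intro ε hε hε1
    have h1 := h (1 - ε) (by linarith) (by linarith)
    rw [@norm_sub_sq_real, expand] at h1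
    nlinarith [h1]
  rcases eq_or_lt_of_le (norm_nonneg f) with hf | hf
  · simp [← hf]
    nlinarith [key 1 one_pos le_rfl, hf]
  have hf2 : 0 < ‖f‖ ^ 2 := by positivity
  have : 2 * ‖f‖ ^ 2 ≤ 2 * ⟪f, g⟫ := by
    apply le_of_forall_pos_le_add
    intro δ hδ
    set ε := min 1 (δ / ‖f‖ ^ 2) with hεdef
    have hεpos : 0 < ε := lt_min one_pos (by positivity)
    have hε1 : ε ≤ 1 := min_le_left _ _
    have h1 := key ε hεpos hε1
    have h2 : ε * ‖f‖ ^ 2 ≤ δ := by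
      have := min_le_right 1 (δ / ‖f‖ ^ 2)
      calc ε * ‖f‖ ^ 2 ≤ (δ / ‖f‖ ^ 2) * ‖f‖ ^ 2 := by
            exact mul_le_mul_of_nonneg_right this hf2.le
        _ = δ := by field_simp
    nlinarith
  linarith

/-- Limitation of weak-to-strong generalization with bootstrapping: every student in a
chain of shrink-optimal students has loss at least `(1 − √(1 − L_TE))² ≥ (1/4) L_TE²`. -/
theorem weakToStrong_bootstrapping_limit {H : Type*} [NormedAddCommGroup H]
    [InnerProductSpace ℝ H] (fstar : H) (hstar : ‖fstar‖ ^ 2 = 1)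
    (f : ℕ → H)
    (h0 : ShrinkOptimal (f 0) fstar)
    (hstep : ∀ i : ℕ, ShrinkOptimal (f (i + 1)) (f i)) :
    ∀ i : ℕ,
      (1 - Real.sqrt (1 - ‖f 0 - fstar‖ ^ 2)) ^ 2 ≤ ‖f i - fstar‖ ^ 2 ∧
      (1 / 4) * (‖f 0 - fstar‖ ^ 2) ^ 2 ≤
        (1 - Real.sqrt (1 - ‖f 0 - fstar‖ ^ 2)) ^ 2 := by
  have hstar1 : ‖fstar‖ = 1 := by nlinarith [norm_nonneg fstar]
  have hI0 : ‖f 0‖ ^ 2 ≤ ⟪f 0, fstar⟫ := inner_ge_of_shrinkOptimal h0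
  -- norms are non-increasing along the chain
  have hmono : ∀ i : ℕ, ‖f i‖ ≤ ‖f 0‖ := by
    intro i
    induction i with
    | zero => exact le_refl _
    | succ n ih =>
      have h1 : ‖f (n+1)‖ ^ 2 ≤ ⟪f (n+1), f n⟫ := inner_ge_of_shrinkOptimal (hstep n)
      have h2 : ⟪f (n+1), f n⟫ ≤ ‖f (n+1)‖ * ‖f n‖ := real_inner_le_norm _ _
      have h3 : ‖f (n+1)‖ ≤ ‖f n‖ := by
        nlinarith [norm_nonneg (f (n+1)), norm_nonneg (f n)]
      linarith
  -- ‖f 0‖ ≤ 1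
  have h01 : ‖f 0‖ ≤ 1 := by
    have h2 : ⟪f 0, fstar⟫ ≤ ‖f 0‖ * ‖fstar‖ := real_inner_le_norm _ _
    rw [hstar1, mul_one] at h2
    nlinarith [norm_nonneg (f 0)]
  set L := ‖f 0 - fstar‖ ^ 2 with hLdef
  have hLexp : L = ‖f 0‖ ^ 2 - 2 * ⟪f 0, fstar⟫ + 1 := by
    rw [hLdef, @norm_sub_sq_real, hstar]; try ring
  have hLnonneg : 0 ≤ L := sq_nonneg _
  have hLle : L ≤ 1 - ‖f 0‖ ^ 2 := by linarith
  have hsq : Real.sqrt (1 - L) ^ 2 = 1 - L := Real.sq_sqrt (by nlinarith [sq_nonneg ‖f 0‖])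
  have hsnn : 0 ≤ Real.sqrt (1 - L) := Real.sqrt_nonneg _
  have hs1 : Real.sqrt (1 - L) ≤ 1 := by nlinarith
  have hge : ‖f 0‖ ≤ Real.sqrt (1 - L) := by nlinarith [norm_nonneg (f 0)]
  intro i
  constructor
  · -- main bound
    have h1 : ⟪f i, fstar⟫ ≤ ‖f i‖ := by
      have := real_inner_le_norm (f i) fstar
      rwa [hstar1, mul_one] at this
    have hexp : ‖f i - fstar‖ ^ 2 = ‖f i‖ ^ 2 - 2 * ⟪f i, fstar⟫ + 1 := by
      rw [@norm_sub_sq_real, hstar]; try ring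
    have h2 : (1 - ‖f i‖) ^ 2 ≤ ‖f i - fstar‖ ^ 2 := by nlinarith
    have h3 : (1 - ‖f 0‖) ^ 2 ≤ (1 - ‖f i‖) ^ 2 := by
      have := hmono i
      nlinarith [norm_nonneg (f i)]
    have h4 : (1 - Real.sqrt (1 - L)) ^ 2 ≤ (1 - ‖f 0‖) ^ 2 := by
      nlinarith [norm_nonneg (f 0)]
    linarith
  · -- (1/4) L² ≤ (1 - √(1-L))²
    nlinarith [sq_nonneg (1 - Real.sqrt (1 - L)), sq_nonneg (1 + Real.sqrt (1 - L))]
end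

section
/- (Limit of Random-Feature Weak-to-Strong Generalization, spectral form.) Let H be a real Hilbert space with a Hilbert basis (e_k)_{k∈ℕ}, let λ : ℕ → ℝ satisfy λ_k ≥ 0, and let T ≥ 0. Let f* ∈ H with ‖f*‖² = 1, let f_teacher ∈ H be shrink-optimal with respect to f*, and let f_student ∈ H satisfy ⟪f_student, e_k⟫ = (1 − exp(−λ_k · T)) · ⟪f_teacher, e_k⟫ for every k. Set L_TE := ‖f_teacher − f*‖² and L_ST := ‖f_student − f*‖². Then L_ST ≥ (√(1 + 3·L_TE) − √(1 − L_TE))² / 4 ≥ (3/4)·L_TE². -/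
/-!
Write `L = ‖f - f*‖²` for the teacher `f`. Shrink-optimality is a first-order condition at
`α = 1`: it forces `‖f‖² ≤ ⟪f, f*⟫`, i.e. `‖f‖² + L ≤ ‖f*‖² = 1`. Since the student multiplies
every eigencoefficient of `f` by a factor in `[0, 1]`, it lies in the ball with diameter `[0, f]`,
centred at `f / 2` with radius `‖f‖ / 2 ≤ √(1 - L) / 2`. By the parallelogram law the centre is at
distance `√(2 + 2L - ‖f‖²) / 2 ≥ √(1 + 3L) / 2` from `f*`, and the triangle inequality gives the
first bound. The second is AM-GM: `2√((1 + 3L)(1 - L)) ≤ (1 + 3L)(1 - L) + 1`.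
-/

open scoped RealInnerProductSpace

section

variable {H : Type*} [NormedAddCommGroup H] [InnerProductSpace ℝ H]

theorem norm_smul_sub_sq_sub_norm_sub_sq (α : ℝ) (f g : H) :
    ‖α • f - g‖ ^ 2 - ‖f - g‖ ^ 2 = (1 - α) * (2 * ⟪f, g⟫ - (1 + α) * ‖f‖ ^ 2) := by
  rw [norm_sub_sq_real, norm_sub_sq_real, norm_smul, real_inner_smul_left, Real.norm_eq_abs,
    mul_pow, sq_abs]
  ring

theorem ShrinkOptimal.norm_sq_le_inner {f g : H} (h : ShrinkOptimal f g) :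
    ‖f‖ ^ 2 ≤ ⟪f, g⟫ := by
  have hgain : ∀ α : ℝ, 0 ≤ α → α ≤ 1 → 0 ≤ (1 - α) * (2 * ⟪f, g⟫ - (1 + α) * ‖f‖ ^ 2) :=
    fun α h0 h1 => by
      rw [← norm_smul_sub_sq_sub_norm_sub_sq]
      linarith [h α h0 h1]
  by_contra! hlt
  have hinner : 0 ≤ ⟪f, g⟫ := by nlinarith [hgain 0 le_rfl zero_le_one, sq_nonneg ‖f‖]
  have hf : 0 < ‖f‖ ^ 2 := hinner.trans_lt hlt
  -- `α` is the midpoint of `1` and the critical point `⟪f, g⟫ / ‖f‖²` of `α ↦ ‖α • f - g‖²`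
  obtain ⟨α, hα⟩ : ∃ α : ℝ, α * (2 * ‖f‖ ^ 2) = ⟪f, g⟫ + ‖f‖ ^ 2 :=
    ⟨_, div_mul_cancel₀ _ (by positivity)⟩
  have hα0 : 0 ≤ α := by nlinarith
  have hα1 : α ≤ 1 := by nlinarith
  have hval : (1 - α) * (2 * ⟪f, g⟫ - (1 + α) * ‖f‖ ^ 2) * (4 * ‖f‖ ^ 2) =
      -3 * (‖f‖ ^ 2 - ⟪f, g⟫) ^ 2 := by
    linear_combination (2 * ‖f‖ ^ 2 * α + ⟪f, g⟫ + ‖f‖ ^ 2 - 4 * ⟪f, g⟫) * hα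
  linarith [mul_nonneg (hgain α hα0 hα1) (by positivity : (0 : ℝ) ≤ 4 * ‖f‖ ^ 2),
    pow_pos (sub_pos.2 hlt) 2]

theorem ShrinkOptimal.norm_sq_add_norm_sub_sq_le {f g : H} (h : ShrinkOptimal f g) :
    ‖f‖ ^ 2 + ‖f - g‖ ^ 2 ≤ ‖g‖ ^ 2 := by
  rw [norm_sub_sq_real]
  linarith [h.norm_sq_le_inner]

theorem HilbertBasis.norm_le_norm_of_abs_inner_le {ι : Type*} (b : HilbertBasis ι ℝ H) {u v : H}
    (h : ∀ i, |⟪u, b i⟫| ≤ |⟪v, b i⟫|) : ‖u‖ ≤ ‖v‖ := by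
  have hsq : ⟪u, u⟫ ≤ ⟪v, v⟫ := by
    refine hasSum_le (fun i => ?_) (b.hasSum_inner_mul_inner u u) (b.hasSum_inner_mul_inner v v)
    rw [real_inner_comm u (b i), real_inner_comm v (b i), ← sq, ← sq]
    exact sq_le_sq.2 (h i)
  rwa [real_inner_self_eq_norm_sq, real_inner_self_eq_norm_sq,
    pow_le_pow_iff_left₀ (norm_nonneg _) (norm_nonneg _) two_ne_zero] at hsq

theorem HilbertBasis.norm_two_smul_sub_le {ι : Type*} (b : HilbertBasis ι ℝ H) {u v : H}
    (c : ι → ℝ) (hc : ∀ i, c i ∈ Set.Icc (0 : ℝ) 1) (h : ∀ i, ⟪u, b i⟫ = c i * ⟪v, b i⟫) :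
    ‖(2 : ℝ) • u - v‖ ≤ ‖v‖ := by
  refine b.norm_le_norm_of_abs_inner_le fun i => ?_
  have hci : |2 * c i - 1| ≤ 1 := abs_le.2 ⟨by linarith [(hc i).1], by linarith [(hc i).2]⟩
  calc |⟪(2 : ℝ) • u - v, b i⟫| = |2 * c i - 1| * |⟪v, b i⟫| := by
        rw [inner_sub_left, real_inner_smul_left, h i, ← abs_mul]
        ring_nf
    _ ≤ |⟪v, b i⟫| := mul_le_of_le_one_left (abs_nonneg _) hci

theorem ShrinkOptimal.sqrt_sub_sqrt_le_two_mul_norm_sub {f g u : H} (h : ShrinkOptimal f g)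
    (hu : ‖(2 : ℝ) • u - f‖ ≤ ‖f‖) :
    √(‖g‖ ^ 2 + 3 * ‖f - g‖ ^ 2) - √(‖g‖ ^ 2 - ‖f - g‖ ^ 2) ≤ 2 * ‖u - g‖ := by
  have hpyth := h.norm_sq_add_norm_sub_sq_le
  have hpar : ‖(2 : ℝ) • g - f‖ ^ 2 + ‖f‖ ^ 2 = 2 * (‖g‖ ^ 2 + ‖f - g‖ ^ 2) := by
    have := parallelogram_law_with_norm ℝ g (g - f)
    rwa [show g + (g - f) = (2 : ℝ) • g - f by module, sub_sub_cancel, norm_sub_rev g f] at this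
  have hcentre : √(‖g‖ ^ 2 + 3 * ‖f - g‖ ^ 2) ≤ ‖(2 : ℝ) • g - f‖ :=
    Real.sqrt_le_iff.2 ⟨norm_nonneg _, by linarith⟩
  have hradius : ‖f‖ ≤ √(‖g‖ ^ 2 - ‖f - g‖ ^ 2) := Real.le_sqrt_of_sq_le (by linarith)
  have htri : ‖(2 : ℝ) • g - f‖ ≤ 2 * ‖u - g‖ + ‖(2 : ℝ) • u - f‖ := by
    have := norm_sub_le_norm_sub_add_norm_sub ((2 : ℝ) • g) ((2 : ℝ) • u) f
    rwa [← smul_sub, norm_smul, Real.norm_two, norm_sub_rev g u] at this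
  linarith

end

theorem three_mul_sq_le_sqrt_sub_sqrt_sq {L : ℝ} (h0 : 0 ≤ L) (h1 : L ≤ 1) :
    3 * L ^ 2 ≤ (√(1 + 3 * L) - √(1 - L)) ^ 2 := by
  have hs1 : √(1 + 3 * L) ^ 2 = 1 + 3 * L := Real.sq_sqrt (by linarith)
  have hs2 : √(1 - L) ^ 2 = 1 - L := Real.sq_sqrt (by linarith)
  nlinarith [sq_nonneg (√(1 + 3 * L) * √(1 - L) - 1)]

theorem weakToStrong_randomFeature_limit_general {H : Type*} [NormedAddCommGroup H]
    [InnerProductSpace ℝ H]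
    (e : HilbertBasis ℕ ℝ H) (lam : ℕ → ℝ) (hlam : ∀ k, 0 ≤ lam k)
    (T : ℝ) (hT : 0 ≤ T)
    (fstar fteacher fstudent : H) (hstar : ‖fstar‖ ^ 2 = 1)
    (hteacher : ShrinkOptimal fteacher fstar)
    (hstudent : ∀ k : ℕ,
      ⟪fstudent, e k⟫ = (1 - Real.exp (-(lam k * T))) * ⟪fteacher, e k⟫) :
    (Real.sqrt (1 + 3 * ‖fteacher - fstar‖ ^ 2) -
        Real.sqrt (1 - ‖fteacher - fstar‖ ^ 2)) ^ 2 / 4 ≤ ‖fstudent - fstar‖ ^ 2 ∧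
    (3 / 4) * (‖fteacher - fstar‖ ^ 2) ^ 2 ≤
      (Real.sqrt (1 + 3 * ‖fteacher - fstar‖ ^ 2) -
        Real.sqrt (1 - ‖fteacher - fstar‖ ^ 2)) ^ 2 / 4 := by
  have hloss := hteacher.norm_sq_add_norm_sub_sq_le
  have hdecay (k : ℕ) : 1 - Real.exp (-(lam k * T)) ∈ Set.Icc (0 : ℝ) 1 :=
    ⟨sub_nonneg.2 (Real.exp_le_one_iff.2 (neg_nonpos.2 (mul_nonneg (hlam k) hT))),
      by linarith [Real.exp_pos (-(lam k * T))]⟩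
  have hdist :=
    hteacher.sqrt_sub_sqrt_le_two_mul_norm_sub (e.norm_two_smul_sub_le _ hdecay hstudent)
  rw [hstar] at hloss hdist
  have hgap : 0 ≤ √(1 + 3 * ‖fteacher - fstar‖ ^ 2) - √(1 - ‖fteacher - fstar‖ ^ 2) :=
    sub_nonneg.2 (Real.sqrt_le_sqrt (by nlinarith [sq_nonneg ‖fteacher - fstar‖]))
  constructor
  · nlinarith [pow_le_pow_left₀ hgap hdist 2]
  · linarith [three_mul_sq_le_sqrt_sub_sqrt_sq (sq_nonneg ‖fteacher - fstar‖)
      (by linarith [sq_nonneg ‖fteacher‖])]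

/-- Limit of random-feature weak-to-strong generalization (spectral form): for a
shrink-optimal teacher and a gradient-flow student (eigencoefficients of the teacher
shrunk by `1 − e^{−λ_k T}`), the student loss is at least
`(√(1 + 3 L_TE) − √(1 − L_TE))² / 4 ≥ (3/4) L_TE²`. -/
theorem weakToStrong_randomFeature_limit {H : Type*} [NormedAddCommGroup H]
    [InnerProductSpace ℝ H] [CompleteSpace H]
    (e : HilbertBasis ℕ ℝ H) (lam : ℕ → ℝ) (hlam : ∀ k, 0 ≤ lam k)
    (T : ℝ) (hT : 0 ≤ T)
    (fstar fteacher fstudent : H) (hstar : ‖fstar‖ ^ 2 = 1)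
    (hteacher : ShrinkOptimal fteacher fstar)
    (hstudent : ∀ k : ℕ,
      ⟪fstudent, e k⟫ = (1 - Real.exp (-(lam k * T))) * ⟪fteacher, e k⟫) :
    (Real.sqrt (1 + 3 * ‖fteacher - fstar‖ ^ 2) -
        Real.sqrt (1 - ‖fteacher - fstar‖ ^ 2)) ^ 2 / 4 ≤ ‖fstudent - fstar‖ ^ 2 ∧
    (3 / 4) * (‖fteacher - fstar‖ ^ 2) ^ 2 ≤
      (Real.sqrt (1 + 3 * ‖fteacher - fstar‖ ^ 2) -
        Real.sqrt (1 - ‖fteacher - fstar‖ ^ 2)) ^ 2 / 4 :=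
  weakToStrong_randomFeature_limit_general e lam hlam T hT fstar fteacher fstudent hstar hteacher
    hstudent
end

section
/- (Closed-form solution of the gradient-flow dynamics.) Let H be a real Hilbert space with a Hilbert basis (e_k)_{k∈ℕ}, let λ : ℕ → ℝ satisfy λ_k ≥ 0, and let A : H →L[ℝ] H be a continuous linear map with A e_k = λ_k • e_k for every k. Let f* ∈ H and let u : ℝ → H satisfy ⟪u t, e_k⟫ = (1 − exp(−λ_k · t)) · ⟪f*, e_k⟫ for every t ∈ ℝ and every k. Then u 0 = 0 and, for every t ∈ ℝ, u has derivative A (f* − u t) at t (HasDerivAt u (A (f* − u t)) t); i.e., u is the solution of the gradient-flow ODE d/dt f_t = −A (f_t − f*) with initial condition f_0 = 0. -/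
open scoped RealInnerProductSpace

open NormedSpace

/-!
The prescribed coefficients are those of `f* - exp (-t A) f*`: since `A` is diagonal in the
basis, so is `exp (-t A)`, with eigenvalues `e^{-λ_k t}`. Hence `u t = f* - exp (-t A) f*`,
and `d/dt exp (-t A) = -A exp (-t A)` gives `u' t = A (exp (-t A) f*) = A (f* - u t)`.
-/

namespace HilbertBasis

variable {ι H : Type*} [NormedAddCommGroup H] [InnerProductSpace ℝ H] (e : HilbertBasis ι ℝ H)

theorem ext_inner {x y : H} (h : ∀ i, ⟪x, e i⟫ = ⟪y, e i⟫) : x = y :=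
  e.repr.injective <| lp.ext <| funext fun i => by
    simpa only [e.repr_apply_apply, real_inner_comm (e i)] using h i

theorem inner_apply_eq_mul_inner_of_apply_eq_smul {A : H →L[ℝ] H} {lam : ι → ℝ}
    (hA : ∀ i, A (e i) = lam i • e i) (x : H) (i : ι) : ⟪A x, e i⟫ = lam i * ⟪x, e i⟫ := by
  have hsum : HasSum (fun j => ⟪e i, A (e.repr x j • e j)⟫) ⟪e i, A x⟫ :=
    ((e.hasSum_repr x).mapL A).mapL (innerSL ℝ (e i))
  have hterm (j : ι) : ⟪e i, A (e.repr x j • e j)⟫ = e.repr x j * lam j * ⟪e i, e j⟫ := by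
    rw [map_smul, hA, real_inner_smul_right, real_inner_smul_right, mul_assoc]
  have hoff (j : ι) (hj : j ≠ i) : ⟪e i, A (e.repr x j • e j)⟫ = 0 := by
    rw [hterm, e.orthonormal.inner_eq_zero hj.symm, mul_zero]
  rw [real_inner_comm, hsum.unique (hasSum_single i hoff), hterm, e.repr_apply_apply,
    real_inner_self_eq_norm_sq, e.orthonormal.norm_eq_one, real_inner_comm]
  ring

end HilbertBasis

namespace ContinuousLinearMap

theorem pow_apply_of_apply_eq_smul {𝕜 E : Type*} [NormedField 𝕜]
    [SeminormedAddCommGroup E] [NormedSpace 𝕜 E] {A : E →L[𝕜] E} {c : 𝕜} {v : E}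
    (hv : A v = c • v) (n : ℕ) : (A ^ n) v = c ^ n • v := by
  induction n with
  | zero => simp
  | succ n ih => rw [pow_succ', mul_apply_eq_comp, ih, map_smul, hv, smul_smul, pow_succ]

theorem exp_apply_of_apply_eq_smul {𝕂 E : Type*} [RCLike 𝕂]
    [NormedAddCommGroup E] [NormedSpace 𝕂 E] [CompleteSpace E] {A : E →L[𝕂] E} {c : 𝕂} {v : E}
    (hv : A v = c • v) : exp A v = exp c • v := by
  have hA : HasSum (fun n => ((n.factorial : 𝕂)⁻¹ • A ^ n) v) (exp A v) :=
    (exp_series_hasSum_exp' (𝕂 := 𝕂) A).mapL (apply 𝕂 E v)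
  have hc : HasSum (fun n => ((n.factorial : 𝕂)⁻¹ • c ^ n) • v) (exp c • v) :=
    (exp_series_hasSum_exp' c).smul_const v
  refine hA.unique (hc.congr_fun fun n => ?_)
  rw [smul_apply, pow_apply_of_apply_eq_smul hv, smul_smul, smul_eq_mul]

end ContinuousLinearMap

theorem hasDerivAt_sub_exp_smul_neg_apply {𝕂 E : Type*} [RCLike 𝕂] [NormedAddCommGroup E]
    [NormedSpace 𝕂 E] [CompleteSpace E] (A : E →L[𝕂] E) (f : E) (t : 𝕂) :
    HasDerivAt (fun s : 𝕂 => f - exp (s • -A) f) (A (exp (t • -A) f)) t := by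
  have hexp := (hasDerivAt_exp_smul_const' (𝕂 := 𝕂) (-A) t).clm_apply (hasDerivAt_const t f)
  convert hexp.const_sub f using 1
  simp

theorem gradientFlow_closed_form_general {H : Type*} [NormedAddCommGroup H]
    [InnerProductSpace ℝ H] [CompleteSpace H]
    (e : HilbertBasis ℕ ℝ H) (lam : ℕ → ℝ)
    (A : H →L[ℝ] H) (hA : ∀ k : ℕ, A (e k) = lam k • e k)
    (fstar : H) (u : ℝ → H)
    (hu : ∀ (t : ℝ) (k : ℕ),
      ⟪u t, e k⟫ = (1 - Real.exp (-(lam k * t))) * ⟪fstar, e k⟫) :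
    u 0 = 0 ∧ ∀ t : ℝ, HasDerivAt u (A (fstar - u t)) t := by
  have hexp_eigen (t : ℝ) (k : ℕ) : exp (t • -A) (e k) = Real.exp (-(lam k * t)) • e k := by
    refine Real.exp_eq_exp_ℝ ▸ ContinuousLinearMap.exp_apply_of_apply_eq_smul ?_
    simp [hA, smul_smul, mul_comm]
  have hflow (t : ℝ) : u t = fstar - exp (t • -A) fstar := e.ext_inner fun k => by
    rw [hu, inner_sub_left, e.inner_apply_eq_mul_inner_of_apply_eq_smul (hexp_eigen t)]
    ring
  refine ⟨e.ext_inner fun k => by simp [hu], fun t => ?_⟩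
  rw [hflow t, funext hflow, sub_sub_cancel]
  exact hasDerivAt_sub_exp_smul_neg_apply A fstar t

/-- Closed-form solution of the gradient-flow dynamics: if `u` has eigencoefficients
`(1 − e^{−λ_k t}) ⟪f*, e_k⟫`, then `u 0 = 0` and `u` solves the ODE
`d/dt u t = A (f* − u t)`, where `A` is the kernel operator, diagonal in the basis `e`. -/
theorem gradientFlow_closed_form {H : Type*} [NormedAddCommGroup H]
    [InnerProductSpace ℝ H] [CompleteSpace H]
    (e : HilbertBasis ℕ ℝ H) (lam : ℕ → ℝ) (hlam : ∀ k, 0 ≤ lam k)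
    (A : H →L[ℝ] H) (hA : ∀ k : ℕ, A (e k) = lam k • e k)
    (fstar : H) (u : ℝ → H)
    (hu : ∀ (t : ℝ) (k : ℕ),
      ⟪u t, e k⟫ = (1 - Real.exp (-(lam k * t))) * ⟪fstar, e k⟫) :
    u 0 = 0 ∧ ∀ t : ℝ, HasDerivAt u (A (fstar - u t)) t :=
  gradientFlow_closed_form_general e lam A hA fstar u hu
end

section
/- (Error of the optimal span-predictor in the high-order directions.) Let H be a real Hilbert space and let P, Q : H →L[ℝ] H be orthogonal projections (self-adjoint idempotent continuous linear maps), with the range of Q finite-dimensional. Let f* ∈ H be such that f* = P (Q h) for some h ∈ H, and set f̂ := Q f* (the best approximation of f* from the range of Q). Let κ > 0 be such that ⟪x, Q (P (Q x))⟫ ≥ κ·‖x‖² for every x in the range of the composite operator Q ∘ P ∘ Q. Then ‖f̂ − P f̂‖² ≥ κ · ‖f̂ − f*‖². -/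
open scoped RealInnerProductSpace

/-- Error of the optimal span-predictor in the high-order directions: if `Q` projects
onto the (finite-dimensional) span of the teacher features, `P` onto the top
eigendirections, `f* = P (Q h)` lies in the projected feature span, `f̂ = Q f*` is the
optimally trained teacher, and `κ` lower-bounds the quadratic form of `QPQ` on its
range, then the teacher's high-order energy `‖f̂ − P f̂‖²` is at least `κ ‖f̂ − f*‖²`. -/
theorem teacher_high_order_error {H : Type*} [NormedAddCommGroup H]
    [InnerProductSpace ℝ H] [CompleteSpace H]
    (P Q : H →L[ℝ] H)
    (hPsa : IsSelfAdjoint P) (hPidem : P.comp P = P)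
    (hQsa : IsSelfAdjoint Q) (hQidem : Q.comp Q = Q)
    (hQfin : FiniteDimensional ℝ (LinearMap.range (Q : H →ₗ[ℝ] H)))
    (fstar h : H) (hfstar : fstar = P (Q h))
    (κ : ℝ) (hκ : 0 < κ)
    (halign : ∀ x ∈ Set.range (fun y : H => Q (P (Q y))),
      κ * ‖x‖ ^ 2 ≤ ⟪x, Q (P (Q x))⟫) :
    κ * ‖Q fstar - fstar‖ ^ 2 ≤ ‖Q fstar - P (Q fstar)‖ ^ 2 := by
  -- basic facts about the projections
  have hPs : ∀ x y : H, ⟪P x, y⟫ = ⟪x, P y⟫ := fun x y =>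
    (ContinuousLinearMap.isSelfAdjoint_iff_isSymmetric.mp hPsa) x y
  have hQs : ∀ x y : H, ⟪Q x, y⟫ = ⟪x, Q y⟫ := fun x y =>
    (ContinuousLinearMap.isSelfAdjoint_iff_isSymmetric.mp hQsa) x y
  have hPP : ∀ x : H, P (P x) = P x := fun x => congrArg (fun A : H →L[ℝ] H => A x) hPidem
  have hQQ : ∀ x : H, Q (Q x) = Q x := fun x => congrArg (fun A : H →L[ℝ] H => A x) hQidem
  have hinnerP : ∀ x : H, ⟪x, P x⟫ = ‖P x‖ ^ 2 := by
    intro x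
    calc ⟪x, P x⟫ = ⟪x, P (P x)⟫ := by rw [hPP]
      _ = ⟪P x, P x⟫ := (hPs x (P x)).symm
      _ = ‖P x‖ ^ 2 := real_inner_self_eq_norm_sq _
  have hinnerQ : ∀ x : H, ⟪x, Q x⟫ = ‖Q x‖ ^ 2 := by
    intro x
    calc ⟪x, Q x⟫ = ⟪x, Q (Q x)⟫ := by rw [hQQ]
      _ = ⟪Q x, Q x⟫ := (hQs x (Q x)).symm
      _ = ‖Q x‖ ^ 2 := real_inner_self_eq_norm_sq _
  -- the finite-dimensional range of Q, and QPQ restricted to it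
  set E := LinearMap.range (Q : H →ₗ[ℝ] H) with hE
  haveI : FiniteDimensional ℝ E := hQfin
  have hmem : ∀ x : H, Q (P (Q x)) ∈ E := fun x => LinearMap.mem_range.2 ⟨P (Q x), rfl⟩
  have hQE : ∀ x : E, Q (x : H) = (x : H) := by
    rintro ⟨-, y, rfl⟩
    exact hQQ y
  let T : E →ₗ[ℝ] E :=
    { toFun := fun x => ⟨Q (P (Q (x : H))), hmem _⟩
      map_add' := by intro x y; ext; simp
      map_smul' := by intro c x; ext; simp }
  have hTapp : ∀ x : E, ((T x : E) : H) = Q (P (Q (x : H))) := fun x => rfl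
  have hTsym : T.IsSymmetric := by
    intro x y
    rw [Submodule.coe_inner, Submodule.coe_inner, hTapp, hTapp, hQs, hPs, hQs]
  -- the quadratic forms of T, T², T³
  have hquad : ∀ x : E, ⟪x, T x⟫ = ‖P (x : H)‖ ^ 2 := by
    intro x
    rw [Submodule.coe_inner, hTapp, hQE, ← hQs, hQE, hinnerP]
  -- eigenbasis of T
  set n := Module.finrank ℝ E with hn
  have hrank : Module.finrank ℝ E = n := rfl
  set b := hTsym.eigenvectorBasis hrank with hb
  set μ := hTsym.eigenvalues hrank with hμ
  have hbe : ∀ i, T (b i) = μ i • b i := fun i => hTsym.apply_eigenvectorBasis hrank i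
  have hbnorm : ∀ i, ‖b i‖ = 1 := fun i => b.orthonormal.1 i
  have hbnormH : ∀ i, ‖((b i : E) : H)‖ = 1 := fun i => hbnorm i
  have hμval : ∀ i, μ i = ‖P ((b i : E) : H)‖ ^ 2 := by
    intro i
    have : ⟪b i, T (b i)⟫ = μ i := by
      rw [hbe, real_inner_smul_right, real_inner_self_eq_norm_sq, hbnorm]
      ring
    rw [← this, hquad]
  have hμ0 : ∀ i, 0 ≤ μ i := fun i => (hμval i).symm ▸ sq_nonneg _
  have hμ1 : ∀ i, μ i ≤ 1 := by
    intro i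
    rw [hμval i]
    have hle : ‖P ((b i : E) : H)‖ ≤ 1 := by
      have h1 : ‖P ((b i : E) : H)‖ ^ 2 = ⟪((b i : E) : H), P ((b i : E) : H)⟫ :=
        (hinnerP _).symm
      have h2 : ⟪((b i : E) : H), P ((b i : E) : H)⟫ ≤ ‖((b i : E) : H)‖ * ‖P ((b i : E) : H)‖ :=
        real_inner_le_norm _ _
      have h3 : ‖((b i : E) : H)‖ = 1 := hbnorm i
      nlinarith [norm_nonneg (P ((b i : E) : H))]
    nlinarith [norm_nonneg (P ((b i : E) : H))]
  -- eigenvalues are either 0 or at least κ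
  have hμκ : ∀ i, μ i ≠ 0 → κ ≤ μ i := by
    intro i hne
    have hmemx : ((T (b i) : E) : H) ∈ Set.range (fun y : H => Q (P (Q y))) :=
      ⟨(b i : E), (hTapp _).symm⟩
    have key := halign _ hmemx
    have hx : ((T (b i) : E) : H) = μ i • ((b i : E) : H) := by
      rw [hbe]; rfl
    have hQPQx : Q (P (Q ((T (b i) : E) : H))) = (μ i * μ i) • ((b i : E) : H) := by
      rw [hx, map_smul, map_smul, map_smul]
      have : Q (P (Q ((b i : E) : H))) = ((T (b i) : E) : H) := (hTapp _).symm
      rw [this, hx, smul_smul]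
    rw [hQPQx, hx] at key
    have hnx : ‖μ i • ((b i : E) : H)‖ ^ 2 = μ i ^ 2 := by
      rw [norm_smul, hbnormH, mul_one, Real.norm_eq_abs, sq_abs]
    have hix : ⟪μ i • ((b i : E) : H), (μ i * μ i) • ((b i : E) : H)⟫ = μ i ^ 3 := by
      rw [real_inner_smul_left, real_inner_smul_right, real_inner_self_eq_norm_sq, hbnormH]
      ring
    rw [hnx, hix] at key
    have hpos : 0 < μ i ^ 2 := by positivity
    nlinarith
  -- the vector v = Q h in E
  set v : E := ⟨Q h, LinearMap.mem_range.2 ⟨h, rfl⟩⟩ with hv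
  -- coordinates
  set c : Fin n → ℝ := fun i => ⟪v, b i⟫ with hc
  have hbiTv : ∀ (w : E) (i), ⟪b i, T w⟫ = μ i * ⟪b i, w⟫ := by
    intro w i
    rw [← hTsym (b i) w, hbe, real_inner_smul_left]
  have hTvbi : ∀ (w : E) (i), ⟪T w, b i⟫ = μ i * ⟪w, b i⟫ := by
    intro w i
    rw [hTsym w (b i), hbe, real_inner_smul_right]
  have hA : ⟪v, T v⟫ = ∑ i, μ i * c i ^ 2 := by
    rw [← b.sum_inner_mul_inner v (T v)]
    refine Finset.sum_congr rfl fun i _ => ?_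
    simp only [hbiTv, hc]
    rw [real_inner_comm v (b i)]
    ring
  have hB : ⟪T v, T v⟫ = ∑ i, μ i ^ 2 * c i ^ 2 := by
    rw [← b.sum_inner_mul_inner (T v) (T v)]
    refine Finset.sum_congr rfl fun i _ => ?_
    simp only [hTvbi, hbiTv, hc]
    rw [real_inner_comm v (b i)]
    ring
  have hC : ⟪T v, T (T v)⟫ = ∑ i, μ i ^ 3 * c i ^ 2 := by
    rw [← b.sum_inner_mul_inner (T v) (T (T v))]
    refine Finset.sum_congr rfl fun i _ => ?_
    simp only [hTvbi, hbiTv, hc]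
    rw [real_inner_comm v (b i)]
    ring
  -- identify the geometric quantities with the quadratic forms
  have hTvH : ((T v : E) : H) = Q fstar := by
    rw [hTapp]
    show Q (P (Q (Q h))) = Q fstar
    rw [hQQ, hfstar]
  have hfnorm : ⟪v, T v⟫ = ‖fstar‖ ^ 2 := by
    rw [Submodule.coe_inner, hTapp]
    show ⟪Q h, Q (P (Q (Q h)))⟫ = ‖fstar‖ ^ 2
    rw [hQQ, ← hQs (Q h) (P (Q h)), hQQ, hinnerP, hfstar]
  have hgnorm : ⟪T v, T v⟫ = ‖Q fstar‖ ^ 2 := by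
    rw [Submodule.coe_inner, hTvH, real_inner_self_eq_norm_sq]
  have hPg : ⟪T v, T (T v)⟫ = ‖P (Q fstar)‖ ^ 2 := by
    rw [Submodule.coe_inner]
    rw [show ((T (T v) : E) : H) = Q (P (Q (Q fstar))) from by rw [hTapp, hTvH]]
    rw [hTvH, hQQ, ← hQs (Q fstar) (P (Q fstar)), hQQ, hinnerP]
  have hgoal1 : ‖Q fstar - fstar‖ ^ 2 = ⟪v, T v⟫ - ⟪T v, T v⟫ := by
    have hQf : ⟪Q fstar, fstar⟫ = ‖Q fstar‖ ^ 2 := by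
      rw [real_inner_comm, hinnerQ]
    rw [hfnorm, hgnorm, norm_sub_sq_real, hQf]
    ring
  have hgoal2 : ‖Q fstar - P (Q fstar)‖ ^ 2 = ⟪T v, T v⟫ - ⟪T v, T (T v)⟫ := by
    have hQPf : ⟪Q fstar, P (Q fstar)⟫ = ‖P (Q fstar)‖ ^ 2 := hinnerP _
    rw [hgnorm, hPg, norm_sub_sq_real, hQPf]
    ring
  rw [hgoal1, hgoal2, hA, hB, hC, ← Finset.sum_sub_distrib, ← Finset.sum_sub_distrib,
    Finset.mul_sum]
  apply Finset.sum_le_sum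
  intro i _
  by_cases hzero : μ i = 0
  · simp [hzero]
  · have hk := hμκ i hzero
    nlinarith [mul_nonneg (mul_nonneg (mul_nonneg (sub_nonneg.2 hk) (hμ0 i))
      (sub_nonneg.2 (hμ1 i))) (sq_nonneg (c i))]
end

section
/- (Weak-to-Strong Multiplicative Error Improvement.) Let H be a real Hilbert space with a Hilbert basis (e_k) indexed by k = 1, 2, 3, …, and let λ : ℕ → ℝ be nonincreasing with λ_k ≥ 0. Let K, S be indices with S ≥ K and let T > 0. Let f* ∈ H satisfy ⟪f*, e_k⟫ = 0 for every k > K and ⟪f*, e_k⟫ = 0 whenever λ_k = 0. Let Q be the orthogonal projection onto a finite-dimensional subspace W of H and set f_teacher := Q f* (the minimizer of ‖· − f*‖ over W). Let P_S be the orthogonal projection onto span{e_1, …, e_S}. Assume f* = P_S (Q h) for some h ∈ H, and let κ ∈ (0,1] satisfy ⟪x, Q (P_S (Q x))⟫ ≥ κ·‖x‖² for every x in the range of Q ∘ P_S ∘ Q. Let f_student ∈ H satisfy ⟪f_student, e_k⟫ = (1 − e^{−λ_k T})·⟪f_teacher, e_k⟫ for every k. Then ‖f_student − f*‖² ≤ (1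 − (1 − λ_{S+1}²·T²)·κ)·‖f_teacher − f*‖² + (e^{−λ_K T} / (2 − e^{−λ_K T}))·‖f*‖². -/
/-!
Expand everything in the eigenbasis and write `ε_k = e^{-λ_k T}`. On the top `K` directions,
where `f*` lives, the student's shrinkage costs at most `ε_K / (2 - ε_K) ⟪f*, e_k⟫²` on top of
the teacher's error; beyond `S`, where `f*` vanishes, the student keeps only the fraction
`(1 - ε_k)² ≤ λ_{S+1}² T²` of the teacher's error. It remains to see that the part
`‖(1 - P_S) Q f*‖²` of the teacher's error beyond `S` is at least `κ ‖Q f* - f*‖²`. With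
`M = Q P_S Q` and `f* = P_S Q h` these two quantities are `⟪h, (M² - M³) h⟫` and
`⟪h, (M - M²) h⟫`. On the finite-dimensional range of `Q` the eigenvalues of `M` lie in
`{0} ∪ [κ, 1]`, where `κ (μ - μ²) ≤ μ² - μ³`.
-/

open scoped RealInnerProductSpace

section Scalar

theorem sq_one_sub_mul_sub_le {ε ε' z b : ℝ} (hε : 0 ≤ ε) (hεε' : ε ≤ ε') (hε' : ε' ≤ 1) :
    ((1 - ε) * z - b) ^ 2 ≤ (z - b) ^ 2 + ε' / (2 - ε') * b ^ 2 := by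
  have h2ε : 0 < 2 - ε := by linarith
  have hmono : ε / (2 - ε) ≤ ε' / (2 - ε') := by
    rw [div_le_div_iff₀ h2ε (by linarith)]
    nlinarith
  -- `ε / (2 - ε)` is the least `ρ` for which the difference is a nonnegative quadratic form
  -- in `(z - b, b)`
  have hform : ((1 - ε) * z - b) ^ 2 ≤ (z - b) ^ 2 + ε / (2 - ε) * b ^ 2 := by
    rw [div_mul_eq_mul_div, ← sub_nonneg]
    have hsq : (z - b) ^ 2 + ε * b ^ 2 / (2 - ε) - ((1 - ε) * z - b) ^ 2
        = ε * ((2 - ε) * (z - b) + (1 - ε) * b) ^ 2 / (2 - ε) := by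
      field_simp
      ring
    rw [hsq]
    positivity
  nlinarith [mul_le_mul_of_nonneg_right hmono (sq_nonneg b)]

theorem one_sub_exp_neg_sq_le_min {x : ℝ} (hx : 0 ≤ x) :
    (1 - Real.exp (-x)) ^ 2 ≤ min 1 (x ^ 2) := by
  have h0 : 0 ≤ 1 - Real.exp (-x) := by
    simpa using Real.exp_le_one_iff.2 (neg_nonpos.2 hx)
  have h1 : 1 - Real.exp (-x) ≤ 1 := by linarith [Real.exp_pos (-x)]
  have hx : 1 - Real.exp (-x) ≤ x := by linarith [Real.add_one_le_exp (-x)]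
  exact le_min (pow_le_one₀ h0 h1) (pow_le_pow_left₀ h0 hx 2)

theorem one_sub_mul_le_one_sub_min_mul {L a b : ℝ} (ha : 0 ≤ a) (hab : a ≤ b) :
    (1 - L) * a ≤ (1 - min 1 L) * b := by
  rcases le_total L 1 with hL | hL
  · rw [min_eq_right hL]
    exact mul_le_mul_of_nonneg_left hab (by linarith)
  · rw [min_eq_left hL, sub_self, zero_mul]
    exact mul_nonpos_of_nonpos_of_nonneg (by linarith) ha

theorem sq_one_sub_exp_mul_sub_le {ι : Type*} [LinearOrder ι] {lam : ι → ℝ}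
    (hmono : Antitone lam) (hpos : ∀ k, 0 ≤ lam k) {T : ℝ} (hT : 0 ≤ T) {K S : ι}
    (hKS : K ≤ S) {ℓ : ℝ} (hℓ : ∀ k, S < k → lam k ≤ ℓ) {b : ι → ℝ}
    (hb : ∀ k, K < k → b k = 0) (z : ι → ℝ) (k : ι) :
    ((1 - Real.exp (-(lam k * T))) * z k - b k) ^ 2 ≤
      (z k - b k) ^ 2 - (1 - min 1 (ℓ ^ 2 * T ^ 2)) * (if k ≤ S then 0 else z k) ^ 2 +
        Real.exp (-(lam K * T)) / (2 - Real.exp (-(lam K * T))) * b k ^ 2 := by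
  have hkT : 0 ≤ lam k * T := mul_nonneg (hpos k) hT
  rcases le_or_gt k K with hkK | hKk
  · rw [if_pos (hkK.trans hKS)]
    have hεK : Real.exp (-(lam k * T)) ≤ Real.exp (-(lam K * T)) :=
      Real.exp_le_exp.2 (neg_le_neg (mul_le_mul_of_nonneg_right (hmono hkK) hT))
    have hεK1 : Real.exp (-(lam K * T)) ≤ 1 :=
      Real.exp_le_one_iff.2 (neg_nonpos.2 (mul_nonneg (hpos K) hT))
    simpa using sq_one_sub_mul_sub_le (Real.exp_pos _).le hεK hεK1
  · have hsq := one_sub_exp_neg_sq_le_min hkT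
    rw [hb k hKk]
    simp only [sub_zero, mul_pow, zero_pow two_ne_zero, mul_zero, add_zero]
    split_ifs with hkS
    · nlinarith [min_le_left 1 ((lam k * T) ^ 2), sq_nonneg (z k)]
    · have hkℓ : (lam k * T) ^ 2 ≤ ℓ ^ 2 * T ^ 2 := by
        rw [← mul_pow]
        exact pow_le_pow_left₀ hkT (mul_le_mul_of_nonneg_right (hℓ k (not_le.1 hkS)) hT) 2
      nlinarith [hsq.trans (min_le_min_left 1 hkℓ), sq_nonneg (z k)]

end Scalar

section InnerProduct

variable {E : Type*} [NormedAddCommGroup E] [InnerProductSpace ℝ E]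

namespace HilbertBasis

variable {ι : Type*} (e : HilbertBasis ι ℝ E)

theorem hasSum_inner_sq (x : E) : HasSum (fun i => ⟪x, e i⟫ ^ 2) (‖x‖ ^ 2) := by
  simpa [sq, real_inner_comm x, real_inner_self_eq_norm_sq] using e.hasSum_inner_mul_inner x x

theorem norm_sq_le_of_inner_sq_le {x y z w : E} {a c : ℝ}
    (h : ∀ i, ⟪x, e i⟫ ^ 2 ≤ ⟪y, e i⟫ ^ 2 - a * ⟪z, e i⟫ ^ 2 + c * ⟪w, e i⟫ ^ 2) :
    ‖x‖ ^ 2 ≤ ‖y‖ ^ 2 - a * ‖z‖ ^ 2 + c * ‖w‖ ^ 2 :=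
  hasSum_le h (e.hasSum_inner_sq x)
    (((e.hasSum_inner_sq y).sub ((e.hasSum_inner_sq z).mul_left a)).add
      ((e.hasSum_inner_sq w).mul_left c))

end HilbertBasis

namespace IsStarProjection

variable [CompleteSpace E] {P : E →L[ℝ] E}

theorem apply_apply (hP : IsStarProjection P) (x : E) : P (P x) = P x :=
  congr($(hP.isIdempotentElem.eq) x)

theorem inner_apply_left (hP : IsStarProjection P) (x y : E) : ⟪P x, y⟫ = ⟪x, P y⟫ :=
  hP.isSelfAdjoint.isSymmetric x y

theorem inner_apply_self (hP : IsStarProjection P) (x : E) : ⟪x, P x⟫ = ‖P x‖ ^ 2 := by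
  rw [← real_inner_self_eq_norm_sq, hP.inner_apply_left, hP.apply_apply]

theorem norm_sub_apply_sq (hP : IsStarProjection P) (x : E) :
    ‖x - P x‖ ^ 2 = ‖x‖ ^ 2 - ‖P x‖ ^ 2 := by
  rw [norm_sub_sq_real, hP.inner_apply_self]
  ring

theorem norm_apply_sq_le (hP : IsStarProjection P) (x : E) : ‖P x‖ ^ 2 ≤ ‖x‖ ^ 2 := by
  linarith [hP.norm_sub_apply_sq x, sq_nonneg ‖x - P x‖]

theorem inner_apply_eq_ite (hP : IsStarProjection P) {ι : Type*} {e : ι → E}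
    (he : Orthonormal ℝ e) {p : ι → Prop} [DecidablePred p]
    (hrange : LinearMap.range (P : E →ₗ[ℝ] E) = Submodule.span ℝ {x | ∃ k, p k ∧ x = e k})
    (x : E) (k : ι) : ⟪P x, e k⟫ = if p k then ⟪x, e k⟫ else 0 := by
  split_ifs with hk
  · obtain ⟨y, hy⟩ : e k ∈ LinearMap.range (P : E →ₗ[ℝ] E) :=
      hrange ▸ Submodule.subset_span ⟨k, hk, rfl⟩
    rw [hP.inner_apply_left, ← hy]
    exact congrArg _ (hP.apply_apply y)
  · have hspan : Submodule.span ℝ {x | ∃ j, p j ∧ x = e j} ≤ (ℝ ∙ e k)ᗮ := by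
      rw [Submodule.span_le]
      rintro _ ⟨j, hj, rfl⟩
      exact Submodule.mem_orthogonal_singleton_iff_inner_left.2
        (he.inner_eq_zero fun hjk => hk (hjk ▸ hj))
    exact Submodule.mem_orthogonal_singleton_iff_inner_left.1
      (hspan (hrange ▸ LinearMap.mem_range_self (P : E →ₗ[ℝ] E) x))

end IsStarProjection

namespace LinearMap.IsSymmetric

variable {V : Type*} [NormedAddCommGroup V] [InnerProductSpace ℝ V] [FiniteDimensional ℝ V]
  {T : V →ₗ[ℝ] V} {n : ℕ}

theorem repr_pow_apply (hT : T.IsSymmetric) (hn : Module.finrank ℝ V = n) (v : V) (a : ℕ)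
    (i : Fin n) :
    (hT.eigenvectorBasis hn).repr ((T ^ a) v) i =
      hT.eigenvalues hn i ^ a * (hT.eigenvectorBasis hn).repr v i := by
  induction a with
  | zero => simp
  | succ a ih =>
    rw [pow_succ', Module.End.mul_apply, hT.eigenvectorBasis_apply_self_apply, ih]
    simp only [RCLike.ofReal_real_eq_id, id_eq]
    ring

theorem inner_pow_apply_pow_apply (hT : T.IsSymmetric) (hn : Module.finrank ℝ V = n) (v : V)
    (a b : ℕ) :
    ⟪(T ^ a) v, (T ^ b) v⟫ =
      ∑ i, hT.eigenvalues hn i ^ (a + b) * (hT.eigenvectorBasis hn).repr v i ^ 2 := by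
  rw [← (hT.eigenvectorBasis hn).sum_inner_mul_inner]
  refine Finset.sum_congr rfl fun i _ => ?_
  rw [real_inner_comm, ← OrthonormalBasis.repr_apply_apply, ← OrthonormalBasis.repr_apply_apply,
    hT.repr_pow_apply, hT.repr_pow_apply]
  ring

theorem mul_inner_sub_le_of_hasEigenvalue (hT : T.IsSymmetric) {κ : ℝ} (hκ : 0 ≤ κ)
    (hspec : ∀ μ, Module.End.HasEigenvalue T μ → μ = 0 ∨ κ ≤ μ ∧ μ ≤ 1) (u : V) :
    κ * (⟪u, T u⟫ - ⟪T u, T u⟫) ≤ ⟪T u, T u⟫ - ⟪T u, T (T u)⟫ := by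
  have hsum := hT.inner_pow_apply_pow_apply rfl u
  have h01 := hsum 0 1
  have h11 := hsum 1 1
  have h12 := hsum 1 2
  rw [sq, Module.End.mul_apply] at h12
  simp only [pow_zero, pow_one, Module.End.one_apply, Nat.reduceAdd] at h01 h11 h12
  rw [h01, h11, h12, ← Finset.sum_sub_distrib, Finset.mul_sum, ← Finset.sum_sub_distrib]
  refine Finset.sum_le_sum fun i _ => ?_
  have hμ := hspec (hT.eigenvalues rfl i) (by simpa using hT.hasEigenvalue_eigenvalues rfl i)
  generalize hT.eigenvalues rfl i = μ at hμ ⊢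
  generalize (hT.eigenvectorBasis rfl).repr u i = c
  rcases hμ with rfl | ⟨hκμ, hμ1⟩
  · simp
  · nlinarith [mul_nonneg (mul_nonneg (mul_nonneg (sub_nonneg.2 hκμ) (hκ.trans hκμ))
      (sub_nonneg.2 hμ1)) (sq_nonneg c)]

end LinearMap.IsSymmetric

theorem mul_norm_sq_sub_le_of_alignment [CompleteSpace E] {P Q : E →L[ℝ] E}
    (hP : IsStarProjection P) (hQ : IsStarProjection Q)
    [FiniteDimensional ℝ (LinearMap.range (Q : E →ₗ[ℝ] E))] {κ : ℝ} (hκ : 0 ≤ κ)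
    (halign : ∀ x ∈ Set.range (fun y : E => Q (P (Q y))), κ * ‖x‖ ^ 2 ≤ ⟪x, Q (P (Q x))⟫)
    (h : E) :
    κ * (‖P (Q h)‖ ^ 2 - ‖Q (P (Q h))‖ ^ 2) ≤ ‖Q (P (Q h))‖ ^ 2 - ‖P (Q (P (Q h)))‖ ^ 2 := by
  have hinner : ∀ x, ⟪x, Q (P (Q x))⟫ = ‖P (Q x)‖ ^ 2 := fun x => by
    rw [← hQ.inner_apply_left, hP.inner_apply_self]
  let A : LinearMap.range (Q : E →ₗ[ℝ] E) →ₗ[ℝ] LinearMap.range (Q : E →ₗ[ℝ] E) :=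
    (Q ∘L P ∘L Q : E →ₗ[ℝ] E).restrict fun x _ => LinearMap.mem_range_self _ (P (Q x))
  have hA : ∀ x, (A x : E) = Q (P (Q x)) := fun _ => rfl
  have hsymm : A.IsSymmetric := fun x y => by
    simp only [Submodule.coe_inner, hA, hQ.inner_apply_left, hP.inner_apply_left]
  -- an eigenvector with eigenvalue `μ ≠ 0` lies in the range of `Q P Q`, where `halign` applies
  have hspec : ∀ μ, Module.End.HasEigenvalue A μ → μ = 0 ∨ κ ≤ μ ∧ μ ≤ 1 := by
    intro μ hμ
    obtain ⟨v, hv⟩ := hμ.exists_hasEigenvector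
    have hAv : Q (P (Q v)) = μ • (v : E) := by rw [← hA, hv.apply_eq_smul]; rfl
    have hv0 : 0 < ‖(v : E)‖ ^ 2 := pow_pos (norm_pos_iff.2 (by simpa using hv.2)) 2
    have hquad : μ * ‖(v : E)‖ ^ 2 = ‖P (Q v)‖ ^ 2 := by
      rw [← hinner, hAv, real_inner_smul_right, real_inner_self_eq_norm_sq]
    have hle : ‖P (Q v)‖ ^ 2 ≤ ‖(v : E)‖ ^ 2 :=
      (hP.norm_apply_sq_le _).trans (hQ.norm_apply_sq_le _)
    by_cases hμ0 : μ = 0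
    · exact Or.inl hμ0
    have hrange : (v : E) ∈ Set.range (fun y : E => Q (P (Q y))) :=
      ⟨μ⁻¹ • (v : E), by simp [hAv, hμ0]⟩
    have hκv := halign _ hrange
    rw [hinner, ← hquad] at hκv
    exact Or.inr ⟨le_of_mul_le_mul_right hκv hv0, by nlinarith⟩
  have key := hsymm.mul_inner_sub_le_of_hasEigenvalue hκ hspec ⟨Q h, LinearMap.mem_range_self _ h⟩
  simp only [Submodule.coe_inner, hA] at key
  rw [hinner, hinner] at key
  simpa only [hQ.apply_apply, real_inner_self_eq_norm_sq] using key

end InnerProduct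

theorem weakToStrong_multiplicative_improvement_general {H : Type*} [NormedAddCommGroup H]
    [InnerProductSpace ℝ H] [CompleteSpace H]
    (e : HilbertBasis ℕ+ ℝ H) (lam : ℕ+ → ℝ)
    (hmono : Antitone lam) (hpos : ∀ k, 0 ≤ lam k)
    (K S : ℕ+) (hKS : K ≤ S) (T : ℝ) (hT : 0 < T)
    (fstar : H)
    (hsupp : ∀ k : ℕ+, K < k → ⟪fstar, e k⟫ = 0)
    (W : Submodule ℝ H) (hW : FiniteDimensional ℝ W)
    (Q : H →L[ℝ] H) (hQsa : IsSelfAdjoint Q) (hQidem : Q.comp Q = Q)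
    (hQrange : LinearMap.range (Q : H →ₗ[ℝ] H) = W)
    (PS : H →L[ℝ] H) (hPSsa : IsSelfAdjoint PS) (hPSidem : PS.comp PS = PS)
    (hPSrange : LinearMap.range (PS : H →ₗ[ℝ] H) =
      Submodule.span ℝ {x : H | ∃ k : ℕ+, k ≤ S ∧ x = e k})
    (h : H) (hfstar : fstar = PS (Q h))
    (κ : ℝ) (hκ0 : 0 < κ)
    (halign : ∀ x ∈ Set.range (fun y : H => Q (PS (Q y))),
      κ * ‖x‖ ^ 2 ≤ ⟪x, Q (PS (Q x))⟫)
    (fstudent : H)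
    (hstudent : ∀ k : ℕ+,
      ⟪fstudent, e k⟫ = (1 - Real.exp (-(lam k * T))) * ⟪Q fstar, e k⟫) :
    ‖fstudent - fstar‖ ^ 2 ≤
      (1 - (1 - (lam (S + 1)) ^ 2 * T ^ 2) * κ) * ‖Q fstar - fstar‖ ^ 2 +
        (Real.exp (-(lam K * T)) / (2 - Real.exp (-(lam K * T)))) * ‖fstar‖ ^ 2 := by
  subst hQrange
  have hQ : IsStarProjection Q := ⟨hQidem, hQsa⟩
  have hP : IsStarProjection PS := ⟨hPSidem, hPSsa⟩
  have hgap : κ * ‖Q fstar - fstar‖ ^ 2 ≤ ‖Q fstar - PS (Q fstar)‖ ^ 2 := by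
    have := mul_norm_sq_sub_le_of_alignment hP hQ hκ0.le halign h
    rw [← hfstar] at this
    rw [norm_sub_rev, hQ.norm_sub_apply_sq, hP.norm_sub_apply_sq]
    linarith
  have hcoeff : ∀ k, ⟪fstudent - fstar, e k⟫ ^ 2 ≤ ⟪Q fstar - fstar, e k⟫ ^ 2 -
      (1 - min 1 (lam (S + 1) ^ 2 * T ^ 2)) * ⟪Q fstar - PS (Q fstar), e k⟫ ^ 2 +
        Real.exp (-(lam K * T)) / (2 - Real.exp (-(lam K * T))) * ⟪fstar, e k⟫ ^ 2 := by
    intro k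
    have hr : ⟪Q fstar - PS (Q fstar), e k⟫ = if k ≤ S then 0 else ⟪Q fstar, e k⟫ := by
      rw [inner_sub_left, hP.inner_apply_eq_ite e.orthonormal hPSrange]
      split_ifs <;> ring
    rw [inner_sub_left, inner_sub_left, hstudent, hr]
    exact sq_one_sub_exp_mul_sub_le hmono hpos hT.le hKS
      (fun k hk => hmono (Order.add_one_le_of_lt hk)) hsupp (fun k => ⟪Q fstar, e k⟫) k
  have herr := e.norm_sq_le_of_inner_sq_le hcoeff
  have hgain := one_sub_mul_le_one_sub_min_mul (L := lam (S + 1) ^ 2 * T ^ 2) (by positivity) hgap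
  linarith

/-- Weak-to-strong multiplicative error improvement. `e` is the eigenbasis of the
student kernel with nonincreasing nonnegative eigenvalues `lam`; `f*` is supported on
the top-`K` eigendirections with nonzero eigenvalues; `Q` is the orthogonal projection
onto the finite-dimensional span `W` of the teacher features, so `f_teacher = Q f*` is
the optimally trained teacher; `PS` is the orthogonal projection onto
`span {e_1, …, e_S}`; `κ` is the teacher–student feature alignment; and the student's
eigencoefficients are the teacher's shrunk by `1 − e^{−λ_k T}`. -/
theorem weakToStrong_multiplicative_improvement {H : Type*} [NormedAddCommGroup H]
    [InnerProductSpace ℝ H] [CompleteSpace H]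
    (e : HilbertBasis ℕ+ ℝ H) (lam : ℕ+ → ℝ)
    (hmono : Antitone lam) (hpos : ∀ k, 0 ≤ lam k)
    (K S : ℕ+) (hKS : K ≤ S) (T : ℝ) (hT : 0 < T)
    (fstar : H)
    (hsupp : ∀ k : ℕ+, K < k → ⟪fstar, e k⟫ = 0)
    (hzero : ∀ k : ℕ+, lam k = 0 → ⟪fstar, e k⟫ = 0)
    (W : Submodule ℝ H) (hW : FiniteDimensional ℝ W)
    (Q : H →L[ℝ] H) (hQsa : IsSelfAdjoint Q) (hQidem : Q.comp Q = Q)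
    (hQrange : LinearMap.range (Q : H →ₗ[ℝ] H) = W)
    (PS : H →L[ℝ] H) (hPSsa : IsSelfAdjoint PS) (hPSidem : PS.comp PS = PS)
    (hPSrange : LinearMap.range (PS : H →ₗ[ℝ] H) =
      Submodule.span ℝ {x : H | ∃ k : ℕ+, k ≤ S ∧ x = e k})
    (h : H) (hfstar : fstar = PS (Q h))
    (κ : ℝ) (hκ0 : 0 < κ) (hκ1 : κ ≤ 1)
    (halign : ∀ x ∈ Set.range (fun y : H => Q (PS (Q y))),
      κ * ‖x‖ ^ 2 ≤ ⟪x, Q (PS (Q x))⟫)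
    (fstudent : H)
    (hstudent : ∀ k : ℕ+,
      ⟪fstudent, e k⟫ = (1 - Real.exp (-(lam k * T))) * ⟪Q fstar, e k⟫) :
    ‖fstudent - fstar‖ ^ 2 ≤
      (1 - (1 - (lam (S + 1)) ^ 2 * T ^ 2) * κ) * ‖Q fstar - fstar‖ ^ 2 +
        (Real.exp (-(lam K * T)) / (2 - Real.exp (-(lam K * T)))) * ‖fstar‖ ^ 2 :=
  weakToStrong_multiplicative_improvement_general e lam hmono hpos K S hKS T hT fstar hsupp W hW Q
    hQsa hQidem hQrange PS hPSsa hPSidem hPSrange h hfstar κ hκ0 halign fstudent hstudent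
end

section
/- For all real β ≥ 1 and all real L with 0 ≤ L ≤ 1, (1/(8β − 4))·(√(4β − 3 + (4β − 1)·L) − √(1 − L))² ≥ (1/2)·(1 + L − √(1 + 2L − 3L²)); moreover at β = 1 equality holds, and (1/2)·(1 + L − √(1 + 2L − 3L²)) = (√(1 + 3L) − √(1 − L))²/4. -/
/-- Monotonicity-in-`β` inequality from the general limitation theorem: for `β ≥ 1` and
teacher loss `L ∈ [0, 1]`, the minimal student loss is minimized at `β = 1`, with
equality there, and the minimum equals `(√(1 + 3L) − √(1 − L))² / 4`. -/
theorem beta_monotone_inequality (β L : ℝ) (hβ : 1 ≤ β) (hL0 : 0 ≤ L) (hL1 : L ≤ 1) :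
    (1 / (8 * β - 4)) *
        (Real.sqrt (4 * β - 3 + (4 * β - 1) * L) - Real.sqrt (1 - L)) ^ 2 ≥
      (1 / 2) * (1 + L - Real.sqrt (1 + 2 * L - 3 * L ^ 2)) ∧
    (1 / (8 * (1 : ℝ) - 4)) *
        (Real.sqrt (4 * (1 : ℝ) - 3 + (4 * (1 : ℝ) - 1) * L) - Real.sqrt (1 - L)) ^ 2 =
      (1 / 2) * (1 + L - Real.sqrt (1 + 2 * L - 3 * L ^ 2)) ∧
    (1 / 2) * (1 + L - Real.sqrt (1 + 2 * L - 3 * L ^ 2)) =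
      (Real.sqrt (1 + 3 * L) - Real.sqrt (1 - L)) ^ 2 / 4 := by
  have hL1' : (0:ℝ) ≤ 1 - L := by linarith
  have h3L : (0:ℝ) ≤ 1 + 3 * L := by linarith
  have he1 : (4 * (1:ℝ) - 3 + (4 * 1 - 1) * L) = 1 + 3 * L := by ring
  rw [he1]
  have hs2sq : Real.sqrt (1 - L) ^ 2 = 1 - L := Real.sq_sqrt hL1'
  have hs3sq : Real.sqrt (1 + 3 * L) ^ 2 = 1 + 3 * L := Real.sq_sqrt h3L
  have hs2nn : 0 ≤ Real.sqrt (1 - L) := Real.sqrt_nonneg _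
  have hs3nn : 0 ≤ Real.sqrt (1 + 3 * L) := Real.sqrt_nonneg _
  have hmix : Real.sqrt (1 + 2 * L - 3 * L ^ 2)
      = Real.sqrt (1 + 3 * L) * Real.sqrt (1 - L) := by
    rw [← Real.sqrt_mul h3L]
    ring_nf
  rw [hmix]
  set s2 := Real.sqrt (1 - L)
  set s3 := Real.sqrt (1 + 3 * L)
  have hA : (0:ℝ) ≤ 4 * β - 3 + (4 * β - 1) * L := by nlinarith
  have hs1sq : Real.sqrt (4 * β - 3 + (4 * β - 1) * L) ^ 2
      = 4 * β - 3 + (4 * β - 1) * L := Real.sq_sqrt hA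
  set s1 := Real.sqrt (4 * β - 3 + (4 * β - 1) * L) with hs1def
  have hs1nn : 0 ≤ s1 := Real.sqrt_nonneg _
  -- key inequality : s1 * s2 ≤ (2β-1) * (s3 * s2)
  have hkey : s1 * s2 ≤ (2 * β - 1) * (s3 * s2) := by
    have h1 : s1 * s2 = Real.sqrt ((4 * β - 3 + (4 * β - 1) * L) * (1 - L)) :=
      (Real.sqrt_mul hA _).symm
    have h2 : (2 * β - 1) * (s3 * s2)
        = Real.sqrt ((2 * β - 1) ^ 2 * ((1 + 3 * L) * (1 - L))) := by
      rw [Real.sqrt_mul (sq_nonneg _), Real.sqrt_sq (by linarith : (0:ℝ) ≤ 2 * β - 1),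
        Real.sqrt_mul h3L]
    rw [h1, h2]
    apply Real.sqrt_le_sqrt
    nlinarith [mul_nonneg hL1' (sq_nonneg (β - 1)),
      mul_nonneg hL1' (mul_nonneg hL0 (mul_nonneg
        (by linarith : (0:ℝ) ≤ 3 * β - 1) (by linarith : (0:ℝ) ≤ β - 1)))]
  have h84 : (0:ℝ) < 8 * β - 4 := by linarith
  refine ⟨?_, ?_, ?_⟩
  · rw [ge_iff_le, show (1/(8*β-4)) * (s1-s2)^2 = (s1-s2)^2/(8*β-4) from by ring, le_div_iff₀ h84]
    nlinarith [hkey, hs1sq, hs2sq]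
  · norm_num
    linear_combination ((1:ℝ)/4) * hs3sq + (1/4) * hs2sq
  · linear_combination (-(1:ℝ)/4) * hs3sq - (1/4) * hs2sq
end

section
/- Let (Ω, μ) be a probability space and let X : Fin n → Ω → ℝ be measurable random variables that are independent (ProbabilityTheory.iIndepFun) with Measure.map (X i) μ = ProbabilityTheory.gaussianReal 0 1 for every i (standard Gaussians). Let a : Fin n → ℝ and let k be a natural number with k ≥ 2. Then ∫ (Σ_i a_i² · (X i ω)²)^k dμ(ω) ≤ k! · (2 · Σ_i a_i²)^k. -/
open MeasureTheory ProbabilityTheory Finset Real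
open scoped Nat

/-!
Since `t ↦ t ^ k` is convex, the weighted power mean inequality with weights `a i ^ 2` gives
`(∑ a_i² X_i²)^k ≤ (∑ a_i²)^(k-1) ∑ a_i² X_i^(2k)` pointwise, so it suffices to bound the even
moments of a standard Gaussian. Integration by parts against the density gives
`E[X^(m+2)] = (m+1) E[X^m]`, hence `E[X^(2k)] = (2k-1)‼ ≤ (2k)‼ = 2^k k!`.
-/

theorem Real.pow_sum_mul_le_pow_sum_mul_sum_mul_pow {ι : Type*} (s : Finset ι) {w z : ι → ℝ}
    (hw : ∀ i ∈ s, 0 ≤ w i) (hz : ∀ i ∈ s, 0 ≤ z i) (k : ℕ) :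
    (∑ i ∈ s, w i * z i) ^ (k + 1) ≤ (∑ i ∈ s, w i) ^ k * ∑ i ∈ s, w i * z i ^ (k + 1) := by
  set S := ∑ i ∈ s, w i
  rcases (sum_nonneg hw).eq_or_lt with hS | hS
  · have hw0 : ∀ i ∈ s, w i = 0 := (sum_eq_zero_iff_of_nonneg hw).1 hS.symm
    have hsum (f : ι → ℝ) : ∑ i ∈ s, w i * f i = 0 :=
      sum_eq_zero fun i hi => by rw [hw0 i hi, zero_mul]
    simp [hsum]
  · have hmean := pow_arith_mean_le_arith_mean_pow s (fun i => w i / S) z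
      (fun i hi => div_nonneg (hw i hi) hS.le) (by rw [← sum_div, div_self hS.ne']) hz (k + 1)
    simp only [div_mul_eq_mul_div, ← sum_div, div_pow] at hmean
    rw [div_le_div_iff₀ (by positivity) hS, pow_succ S, ← mul_assoc, mul_comm _ (S ^ k)] at hmean
    exact le_of_mul_le_mul_right hmean hS

namespace ProbabilityTheory

lemma gaussianPDFReal_zero_one (x : ℝ) :
    gaussianPDFReal 0 1 x = (√(2 * π))⁻¹ * rexp (-x ^ 2 / 2) := by
  simp [gaussianPDFReal]

lemma integral_gaussianReal_zero_one (f : ℝ → ℝ) :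
    ∫ x, f x ∂gaussianReal 0 1 = (√(2 * π))⁻¹ * ∫ x, f x * rexp (-x ^ 2 / 2) := by
  rw [integral_gaussianReal_eq_integral_smul one_ne_zero, ← integral_const_mul]
  simp only [gaussianPDFReal_zero_one, smul_eq_mul]
  congr with x
  ring

lemma integrable_pow_mul_exp_neg_sq_div_two (m : ℕ) :
    Integrable fun x : ℝ => x ^ m * rexp (-x ^ 2 / 2) := by
  have h := integrable_rpow_mul_exp_neg_mul_sq (b := 2⁻¹) (by norm_num) (s := m)
    (by linarith [m.cast_nonneg (α := ℝ)])
  convert h using 3 with x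
  · exact (rpow_natCast x m).symm
  · congr 1
    ring

lemma hasDerivAt_exp_neg_sq_div_two (x : ℝ) :
    HasDerivAt (fun x => rexp (-x ^ 2 / 2)) (-x * rexp (-x ^ 2 / 2)) x := by
  convert ((hasDerivAt_pow 2 x).fun_neg.div_const 2).exp using 1
  norm_num
  ring

-- The derivative of `x ^ (m + 1) e^{-x²/2}` is integrable, and its integral over `ℝ` vanishes.
lemma integral_pow_add_two_mul_exp_neg_sq_div_two (m : ℕ) :
    ∫ x : ℝ, x ^ (m + 2) * rexp (-x ^ 2 / 2) = (m + 1) * ∫ x : ℝ, x ^ m * rexp (-x ^ 2 / 2) := by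
  have hderiv (x : ℝ) : HasDerivAt (fun x => x ^ (m + 1) * rexp (-x ^ 2 / 2))
      ((m + 1) * (x ^ m * rexp (-x ^ 2 / 2)) - x ^ (m + 2) * rexp (-x ^ 2 / 2)) x :=
    ((hasDerivAt_pow (m + 1) x).mul (hasDerivAt_exp_neg_sq_div_two x)).congr_deriv
      (by push_cast [Nat.add_sub_cancel]; ring)
  have hint := integrable_pow_mul_exp_neg_sq_div_two
  have hzero := integral_eq_zero_of_hasDerivAt_of_integrable hderiv
    (((hint m).const_mul _).sub (hint (m + 2))) (hint (m + 1))
  rw [integral_sub ((hint m).const_mul _) (hint (m + 2)), integral_const_mul, sub_eq_zero] at hzero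
  exact hzero.symm

lemma integral_pow_add_two_gaussianReal (m : ℕ) :
    ∫ x, x ^ (m + 2) ∂gaussianReal 0 1 = (m + 1) * ∫ x, x ^ m ∂gaussianReal 0 1 := by
  rw [integral_gaussianReal_zero_one, integral_gaussianReal_zero_one,
    integral_pow_add_two_mul_exp_neg_sq_div_two]
  ring

lemma integral_pow_two_mul_gaussianReal_le (k : ℕ) :
    ∫ x, x ^ (2 * k) ∂gaussianReal 0 1 ≤ 2 ^ k * k ! := by
  induction k with
  | zero => simp
  | succ k ih =>
    have hnonneg : 0 ≤ ∫ x, x ^ (2 * k) ∂gaussianReal 0 1 :=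
      integral_nonneg fun x => by simp only [pow_mul]; positivity
    calc ∫ x, x ^ (2 * (k + 1)) ∂gaussianReal 0 1
        = (2 * k + 1) * ∫ x, x ^ (2 * k) ∂gaussianReal 0 1 := by
          rw [mul_add_one, integral_pow_add_two_gaussianReal]; push_cast; ring
      _ ≤ (2 * (k + 1)) * (2 ^ k * k !) := by gcongr; linarith
      _ = 2 ^ (k + 1) * (k + 1)! := by push_cast [Nat.factorial_succ]; ring

lemma integrable_pow_gaussianReal (μ : ℝ) (v : NNReal) (m : ℕ) :
    Integrable (fun x => x ^ m) (gaussianReal μ v) :=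
  integrable_pow_of_mem_interior_integrableExpSet (by simp) m

variable {Ω : Type*} [MeasurableSpace Ω] {P : Measure Ω} {X : Ω → ℝ}

lemma HasLaw.integrable_pow_of_gaussianReal {μ : ℝ} {v : NNReal}
    (hX : HasLaw X (gaussianReal μ v) P) (m : ℕ) : Integrable (fun ω => X ω ^ m) P := by
  have := integrable_pow_gaussianReal μ v m
  rw [← hX.map_eq] at this
  exact (integrable_map_measure (continuous_pow m).aestronglyMeasurable hX.aemeasurable).1 this

lemma HasLaw.integral_pow_two_mul_le_of_gaussianReal (hX : HasLaw X (gaussianReal 0 1) P)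
    (k : ℕ) :
    ∫ ω, X ω ^ (2 * k) ∂P ≤ 2 ^ k * k ! := by
  have := hX.integral_comp (continuous_pow (2 * k)).aestronglyMeasurable
  simp only [Function.comp_def] at this
  exact this ▸ integral_pow_two_mul_gaussianReal_le k

end ProbabilityTheory

theorem MeasureTheory.integral_pow_sum_mul_le {Ω ι : Type*} [MeasurableSpace Ω] {P : Measure Ω}
    (s : Finset ι) {w : ι → ℝ} {Y : ι → Ω → ℝ} (hw : ∀ i ∈ s, 0 ≤ w i)
    (hY : ∀ i ∈ s, ∀ ω, 0 ≤ Y i ω) (k : ℕ)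
    (hint : ∀ i ∈ s, Integrable (fun ω => Y i ω ^ (k + 1)) P) :
    ∫ ω, (∑ i ∈ s, w i * Y i ω) ^ (k + 1) ∂P ≤
      (∑ i ∈ s, w i) ^ k * ∑ i ∈ s, w i * ∫ ω, Y i ω ^ (k + 1) ∂P := by
  have hbound : Integrable (fun ω => (∑ i ∈ s, w i) ^ k * ∑ i ∈ s, w i * Y i ω ^ (k + 1)) P :=
    (integrable_finsetSum s fun i hi => (hint i hi).const_mul (w i)).const_mul _
  calc ∫ ω, (∑ i ∈ s, w i * Y i ω) ^ (k + 1) ∂P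
      ≤ ∫ ω, (∑ i ∈ s, w i) ^ k * ∑ i ∈ s, w i * Y i ω ^ (k + 1) ∂P :=
        integral_mono_of_nonneg (.of_forall fun ω =>
            pow_nonneg (sum_nonneg fun i hi => mul_nonneg (hw i hi) (hY i hi ω)) _) hbound
          (.of_forall fun ω =>
            Real.pow_sum_mul_le_pow_sum_mul_sum_mul_pow s hw (fun i hi => hY i hi ω) k)
    _ = (∑ i ∈ s, w i) ^ k * ∑ i ∈ s, w i * ∫ ω, Y i ω ^ (k + 1) ∂P := by
        rw [integral_const_mul, integral_finsetSum s fun i hi => (hint i hi).const_mul (w i)]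
        simp_rw [integral_const_mul]

theorem gaussian_moment_bound_general {Ω : Type*} [MeasurableSpace Ω] (μ : Measure Ω)
    {n : ℕ} (X : Fin n → Ω → ℝ)
    (hXm : ∀ i, Measurable (X i))
    (hgauss : ∀ i, Measure.map (X i) μ = gaussianReal 0 1)
    (a : Fin n → ℝ) (k : ℕ) (hk : 2 ≤ k) :
    ∫ ω, (∑ i, a i ^ 2 * X i ω ^ 2) ^ k ∂μ ≤
      (k.factorial : ℝ) * (2 * ∑ i, a i ^ 2) ^ k := by
  obtain ⟨k, rfl⟩ : ∃ j, k = j + 1 := ⟨k - 1, by omega⟩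
  have hlaw (i : Fin n) : HasLaw (X i) (gaussianReal 0 1) μ := ⟨(hXm i).aemeasurable, hgauss i⟩
  have hmoment (i : Fin n) : ∫ ω, (X i ω ^ 2) ^ (k + 1) ∂μ ≤ 2 ^ (k + 1) * (k + 1)! := by
    simpa only [← pow_mul] using (hlaw i).integral_pow_two_mul_le_of_gaussianReal (k + 1)
  calc ∫ ω, (∑ i, a i ^ 2 * X i ω ^ 2) ^ (k + 1) ∂μ
      ≤ (∑ i, a i ^ 2) ^ k * ∑ i, a i ^ 2 * ∫ ω, (X i ω ^ 2) ^ (k + 1) ∂μ :=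
        integral_pow_sum_mul_le _ (fun i _ => sq_nonneg (a i)) (fun i _ ω => sq_nonneg (X i ω)) k
          fun i _ => by simpa only [← pow_mul] using (hlaw i).integrable_pow_of_gaussianReal _
    _ ≤ (∑ i, a i ^ 2) ^ k * ∑ i, a i ^ 2 * (2 ^ (k + 1) * (k + 1)!) := by
        gcongr with i
        exact hmoment i
    _ = (k + 1)! * (2 * ∑ i, a i ^ 2) ^ (k + 1) := by
        rw [← sum_mul]
        ring

/-- Moment bound for a weighted sum of squares of independent standard Gaussians:
`E[(Σ a_i² X_i²)^k] ≤ k! (2 Σ a_i²)^k` for `k ≥ 2`. -/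
theorem gaussian_moment_bound {Ω : Type*} [MeasurableSpace Ω] (μ : Measure Ω)
    [IsProbabilityMeasure μ] {n : ℕ} (X : Fin n → Ω → ℝ)
    (hXm : ∀ i, Measurable (X i))
    (hindep : iIndepFun X μ)
    (hgauss : ∀ i, Measure.map (X i) μ = gaussianReal 0 1)
    (a : Fin n → ℝ) (k : ℕ) (hk : 2 ≤ k) :
    ∫ ω, (∑ i, a i ^ 2 * X i ω ^ 2) ^ k ∂μ ≤
      (k.factorial : ℝ) * (2 * ∑ i, a i ^ 2) ^ k :=
  gaussian_moment_bound_general μ X hXm hgauss a k hk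
end
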